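/- arXiv:2011.04385 — 4 statements merged into one kernel-verified Lean document; each statement's English description precedes it below -/
import Mathlib

section
/- Let d ≥ 1, θ > 0, Q ∈ ℝ_{>0}^d. For y ∈ ℝ_{>0}^d and sequences y^{(n)} ∈ (1/n)ℕ^d \ {0} with y^{(n)} → y, the sampling probability p(n y^{(n)}) = (‖n y^{(n)}‖ choose n y^{(n)}) · B(n y^{(n)} + θQ)/B(θQ) satisfies n^{d-1} p(n y^{(n)}) → ‖y‖^{1-d} · (1/B(θQ)) · ∏_{i=1}^d (y_i/‖y‖)^{θQ_i − 1} as n → ∞, where ‖y‖ = y_1 + ⋯ + y_d and the multinomial coefficient is (‖m‖)!/∏_i m_i!. -/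
open Finset Filter

/-- Multivariate Beta function. -/
noncomputable def multiBeta {d : ℕ} (a : Fin d → ℝ) : ℝ :=
  (∏ i, Real.Gamma (a i)) / Real.Gamma (∑ i, a i)

/-- The PIM sampling probability `p(m) = (‖m‖ choose m) B(m + θQ)/B(θQ)`. -/
noncomputable def pimSamplingProb {d : ℕ} (θ : ℝ) (Q : Fin d → ℝ) (m : Fin d → ℕ) : ℝ :=
  ((Nat.factorial (∑ i, m i) : ℝ) / ∏ i, (Nat.factorial (m i) : ℝ)) *
    (multiBeta (fun i => (m i : ℝ) + θ * Q i) / multiBeta (fun i => θ * Q i))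

private lemma tendsto_add_div (b : ℝ) :
    Tendsto (fun x : ℝ => (x + b) / x) atTop (nhds 1) := by
  have h : Tendsto (fun x : ℝ => 1 + b * x⁻¹) atTop (nhds (1 + b * 0)) :=
    tendsto_const_nhds.add (tendsto_const_nhds.mul tendsto_inv_atTop_zero)
  rw [mul_zero, add_zero] at h
  refine h.congr' ?_
  filter_upwards [eventually_gt_atTop (0 : ℝ)] with x hx
  field_simp

private lemma gammaRatio_le {a x : ℝ} (ha : 0 < a) (ha' : a < 1) (hx : 0 < x) :
    Real.Gamma (x + a) / Real.Gamma (x + 1) ≤ x ^ (a - 1) := by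
  have hG : 0 < Real.Gamma x := Real.Gamma_pos_of_pos hx
  have key := Real.Gamma_mul_add_mul_le_rpow_Gamma_mul_rpow_Gamma hx
    (by linarith : (0:ℝ) < x + 1) (by linarith : (0:ℝ) < 1 - a) ha (by ring)
  rw [show (1 - a) * x + a * (x + 1) = x + a by ring, Real.Gamma_add_one hx.ne'] at key
  have h2 : Real.Gamma x ^ (1 - a) * (x * Real.Gamma x) ^ a = Real.Gamma x * x ^ a := by
    rw [Real.mul_rpow hx.le hG.le,
      show Real.Gamma x ^ (1 - a) * (x ^ a * Real.Gamma x ^ a)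
        = Real.Gamma x ^ (1 - a) * Real.Gamma x ^ a * x ^ a by ring,
      ← Real.rpow_add hG, show (1 : ℝ) - a + a = 1 by ring, Real.rpow_one]
  rw [h2] at key
  rw [Real.Gamma_add_one hx.ne', Real.rpow_sub hx, Real.rpow_one]
  calc Real.Gamma (x + a) / (x * Real.Gamma x)
      ≤ Real.Gamma x * x ^ a / (x * Real.Gamma x) := by gcongr
    _ = x ^ a / x := by field_simp

private lemma gammaRatio_ge {a x : ℝ} (ha : 0 < a) (ha' : a < 1) (hx : 0 < x) :
    (x + a) ^ (a - 1) ≤ Real.Gamma (x + a) / Real.Gamma (x + 1) := by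
  have hxa : (0:ℝ) < x + a := by linarith
  have hG1 : 0 < Real.Gamma (x + 1) := Real.Gamma_pos_of_pos (by linarith)
  have hGa : 0 < Real.Gamma (x + a) := Real.Gamma_pos_of_pos hxa
  have key := Real.Gamma_mul_add_mul_le_rpow_Gamma_mul_rpow_Gamma hxa
    (by linarith : (0:ℝ) < x + a + 1) ha (by linarith : (0:ℝ) < 1 - a) (by ring)
  rw [show a * (x + a) + (1 - a) * (x + a + 1) = x + 1 by ring,
    Real.Gamma_add_one hxa.ne'] at key
  have h2 : Real.Gamma (x + a) ^ a * ((x + a) * Real.Gamma (x + a)) ^ (1 - a)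
      = Real.Gamma (x + a) * (x + a) ^ (1 - a) := by
    rw [Real.mul_rpow hxa.le hGa.le,
      show Real.Gamma (x + a) ^ a * ((x + a) ^ (1 - a) * Real.Gamma (x + a) ^ (1 - a))
        = Real.Gamma (x + a) ^ a * Real.Gamma (x + a) ^ (1 - a) * (x + a) ^ (1 - a) by ring,
      ← Real.rpow_add hGa, show a + (1 - a) = (1:ℝ) by ring, Real.rpow_one]
  rw [h2] at key
  rw [le_div_iff₀ hG1]
  calc (x + a) ^ (a - 1) * Real.Gamma (x + 1)
      ≤ (x + a) ^ (a - 1) * (Real.Gamma (x + a) * (x + a) ^ (1 - a)) := by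
        have := Real.rpow_pos_of_pos hxa (a - 1)
        nlinarith
    _ = Real.Gamma (x + a) * ((x + a) ^ (a - 1) * (x + a) ^ (1 - a)) := by ring
    _ = Real.Gamma (x + a) := by
        rw [← Real.rpow_add hxa, show a - 1 + (1 - a) = (0:ℝ) by ring, Real.rpow_zero, mul_one]

private lemma tendsto_ratio_base {a : ℝ} (ha : 0 < a) (ha1 : a ≤ 1) :
    Tendsto (fun x : ℝ => Real.Gamma (x + a) / Real.Gamma (x + 1) * x ^ (1 - a))
      atTop (nhds 1) := by
  rcases eq_or_lt_of_le ha1 with rfl | ha1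
  · refine tendsto_const_nhds.congr' ?_
    filter_upwards [eventually_gt_atTop (0 : ℝ)] with x hx
    rw [sub_self, Real.rpow_zero,
      div_self (Real.Gamma_pos_of_pos (by linarith : (0:ℝ) < x + 1)).ne', one_mul]
  · have hlow : Tendsto (fun x : ℝ => ((x + a) / x) ^ (a - 1)) atTop (nhds 1) := by
      have := (tendsto_add_div a).rpow_const (p := a - 1) (Or.inl one_ne_zero)
      rwa [Real.one_rpow] at this
    refine tendsto_of_tendsto_of_tendsto_of_le_of_le' hlow tendsto_const_nhds ?_ ?_
    · filter_upwards [eventually_gt_atTop (0 : ℝ)] with x hx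
      have h1 : ((x + a) / x) ^ (a - 1) = (x + a) ^ (a - 1) * x ^ (1 - a) := by
        rw [Real.div_rpow (by linarith : (0:ℝ) ≤ x + a) hx.le, div_eq_mul_inv,
          ← Real.rpow_neg hx.le, neg_sub]
      rw [h1]
      exact mul_le_mul_of_nonneg_right (gammaRatio_ge ha ha1 hx)
        (Real.rpow_nonneg hx.le _)
    · filter_upwards [eventually_gt_atTop (0 : ℝ)] with x hx
      calc Real.Gamma (x + a) / Real.Gamma (x + 1) * x ^ (1 - a)
          ≤ x ^ (a - 1) * x ^ (1 - a) :=
            mul_le_mul_of_nonneg_right (gammaRatio_le ha ha1 hx) (Real.rpow_nonneg hx.le _)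
        _ = 1 := by
            rw [← Real.rpow_add hx, show a - 1 + (1 - a) = (0:ℝ) by ring, Real.rpow_zero]

private lemma tendsto_ratio_step {b : ℝ} (hb : 0 < b)
    (h : Tendsto (fun x : ℝ => Real.Gamma (x + b) / Real.Gamma (x + 1) * x ^ (1 - b))
      atTop (nhds 1)) :
    Tendsto (fun x : ℝ => Real.Gamma (x + (b + 1)) / Real.Gamma (x + 1) * x ^ (1 - (b + 1)))
      atTop (nhds 1) := by
  have h2 := h.mul (tendsto_add_div b)
  rw [mul_one] at h2
  refine h2.congr' ?_
  filter_upwards [eventually_gt_atTop (0 : ℝ)] with x hx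
  have hxb : (0:ℝ) < x + b := by linarith
  rw [show x + (b + 1) = x + b + 1 by ring, Real.Gamma_add_one hxb.ne',
    show (1:ℝ) - (b + 1) = (1 - b) + (-1) by ring, Real.rpow_add hx, Real.rpow_neg_one]
  have hG1 : Real.Gamma (x + 1) ≠ 0 := (Real.Gamma_pos_of_pos (by linarith)).ne'
  field_simp

private lemma tendsto_gamma_ratio {a : ℝ} (ha : 0 < a) :
    Tendsto (fun x : ℝ => Real.Gamma (x + a) / Real.Gamma (x + 1) * x ^ (1 - a))
      atTop (nhds 1) := by
  obtain ⟨n, hn⟩ : ∃ n : ℕ, a ≤ n := ⟨⌈a⌉₊, Nat.le_ceil a⟩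
  induction n generalizing a with
  | zero => norm_num at hn; linarith
  | succ k ih =>
    rcases le_or_gt a 1 with h1 | h1
    · exact tendsto_ratio_base ha h1
    · have h2 : 0 < a - 1 := by linarith
      have h3 : a - 1 ≤ (k : ℝ) := by push_cast at hn ⊢; linarith
      have h4 := tendsto_ratio_step h2 (ih h2 h3)
      have e : a - 1 + 1 = a := by ring
      rwa [e] at h4


private lemma rpow_finset_sum {c : ℝ} (hc : 0 < c) {ι : Type*} (s : Finset ι) (f : ι → ℝ) :
    c ^ (∑ i ∈ s, f i) = ∏ i ∈ s, c ^ f i := by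
  induction s using Finset.cons_induction with
  | empty => simp
  | cons i s hi ih => rw [Finset.sum_cons, Finset.prod_cons, Real.rpow_add hc, ih]


/-- asymptotics of the PIM sampling probabilities:
`n^{d-1} p(n y⁽ⁿ⁾) → ‖y‖^{1-d} (1/B(θQ)) ∏ᵢ (yᵢ/‖y‖)^{θQᵢ - 1}`,
where `n y⁽ⁿ⁾ = m n ∈ ℕ^d` and `y⁽ⁿ⁾ = m n / n → y`. -/
theorem pim_sampling_asymptotics (d : ℕ) (hd : 1 ≤ d) (θ : ℝ) (hθ : 0 < θ)
    (Q : Fin d → ℝ) (hQ : ∀ i, 0 < Q i)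
    (y : Fin d → ℝ) (hy : ∀ i, 0 < y i)
    (m : ℕ → Fin d → ℕ) (hm : ∀ n, m n ≠ 0)
    (hconv : ∀ i, Tendsto (fun n : ℕ => (m n i : ℝ) / (n : ℝ)) atTop (nhds (y i))) :
    Tendsto (fun n : ℕ => (n : ℝ) ^ (d - 1) * pimSamplingProb θ Q (m n)) atTop
      (nhds ((∑ i, y i) ^ ((1 : ℝ) - d) * (1 / multiBeta (fun i => θ * Q i)) *
        ∏ i, (y i / ∑ j, y j) ^ (θ * Q i - 1))) := by
  classical
  have hdpos : 0 < d := hd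
  haveI : Nonempty (Fin d) := ⟨⟨0, hdpos⟩⟩
  have hai : ∀ i, 0 < θ * Q i := fun i => mul_pos hθ (hQ i)
  set S : ℝ := ∑ i, θ * Q i with hS_def
  have hS : 0 < S := Finset.sum_pos (fun i _ => hai i) univ_nonempty
  set Y : ℝ := ∑ i, y i with hY_def
  have hY : 0 < Y := Finset.sum_pos (fun i _ => hy i) univ_nonempty
  set B : ℝ := multiBeta (fun i => θ * Q i) with hB_def
  set M : ℕ → ℕ := fun n => ∑ i, m n i with hM_def
  have hMcast : ∀ n, ((M n : ℝ)) = ∑ i, (m n i : ℝ) := fun n => by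
    rw [hM_def]; push_cast; rfl
  -- convergence of M/n
  have hMconv : Tendsto (fun n : ℕ => (M n : ℝ) / n) atTop (nhds Y) := by
    have h := tendsto_finset_sum (univ : Finset (Fin d)) (fun i _ => hconv i)
    refine h.congr fun n => ?_
    rw [← Finset.sum_div, ← hMcast]
  -- m n i → ∞
  have hmi : ∀ i, Tendsto (fun n : ℕ => ((m n i : ℝ))) atTop atTop := by
    intro i
    have h := Filter.Tendsto.pos_mul_atTop (hy i) (hconv i) tendsto_natCast_atTop_atTop
    refine h.congr' ?_
    filter_upwards [eventually_ge_atTop 1] with n hn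
    have : (n : ℝ) ≠ 0 := Nat.cast_ne_zero.mpr (by omega)
    field_simp
  have hMi : Tendsto (fun n : ℕ => ((M n : ℝ))) atTop atTop := by
    have h := Filter.Tendsto.pos_mul_atTop hY hMconv tendsto_natCast_atTop_atTop
    refine h.congr' ?_
    filter_upwards [eventually_ge_atTop 1] with n hn
    have : (n : ℝ) ≠ 0 := Nat.cast_ne_zero.mpr (by omega)
    field_simp
  -- the ratio limits
  have hr : ∀ i, Tendsto (fun n : ℕ => Real.Gamma ((m n i : ℝ) + θ * Q i) /
      Real.Gamma ((m n i : ℝ) + 1) * (m n i : ℝ) ^ (1 - θ * Q i)) atTop (nhds 1) :=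
    fun i => (tendsto_gamma_ratio (hai i)).comp (hmi i)
  have hRinv : Tendsto (fun n : ℕ => Real.Gamma ((M n : ℝ) + S) /
      Real.Gamma ((M n : ℝ) + 1) * (M n : ℝ) ^ (1 - S)) atTop (nhds 1) :=
    (tendsto_gamma_ratio hS).comp hMi
  have hR : Tendsto (fun n : ℕ => Real.Gamma ((M n : ℝ) + 1) /
      Real.Gamma ((M n : ℝ) + S) * (M n : ℝ) ^ (S - 1)) atTop (nhds 1) := by
    have h := hRinv.inv₀ one_ne_zero
    rw [inv_one] at h
    refine h.congr' ?_
    filter_upwards [hMi.eventually (eventually_gt_atTop 0)] with n hn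
    rw [mul_inv, inv_div, ← Real.rpow_neg hn.le, neg_sub]
  have hfrac : Tendsto (fun n : ℕ => ((M n : ℝ) / n) ^ (1 - S)) atTop (nhds (Y ^ (1 - S))) :=
    hMconv.rpow_const (Or.inl hY.ne')
  have hprod : Tendsto (fun n : ℕ => ∏ i, ((m n i : ℝ) / n) ^ (θ * Q i - 1)) atTop
      (nhds (∏ i, (y i) ^ (θ * Q i - 1))) :=
    tendsto_finset_prod _ fun i _ => (hconv i).rpow_const (Or.inl (hy i).ne')
  have hrprod : Tendsto (fun n : ℕ => ∏ i, (Real.Gamma ((m n i : ℝ) + θ * Q i) /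
      Real.Gamma ((m n i : ℝ) + 1) * (m n i : ℝ) ^ (1 - θ * Q i))) atTop (nhds 1) := by
    have h := tendsto_finset_prod (univ : Finset (Fin d)) (fun i _ => hr i)
    simpa using h
  have hcomb : Tendsto (fun n : ℕ => (1 / B) *
      (Real.Gamma ((M n : ℝ) + 1) / Real.Gamma ((M n : ℝ) + S) * (M n : ℝ) ^ (S - 1) *
        ((∏ i, (Real.Gamma ((m n i : ℝ) + θ * Q i) / Real.Gamma ((m n i : ℝ) + 1) *
          (m n i : ℝ) ^ (1 - θ * Q i))) *
        (((M n : ℝ) / n) ^ (1 - S) * ∏ i, ((m n i : ℝ) / n) ^ (θ * Q i - 1))))) atTop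
      (nhds ((1 / B) * (1 * (1 * (Y ^ (1 - S) * ∏ i, (y i) ^ (θ * Q i - 1)))))) :=
    tendsto_const_nhds.mul (hR.mul (hrprod.mul (hfrac.mul hprod)))
  -- identify the limit value
  have hlim : Y ^ ((1 : ℝ) - d) * (1 / B) * ∏ i, (y i / Y) ^ (θ * Q i - 1)
      = (1 / B) * (1 * (1 * (Y ^ (1 - S) * ∏ i, (y i) ^ (θ * Q i - 1)))) := by
    have key : ∀ i : Fin d, (y i / Y) ^ (θ * Q i - 1)
        = (y i) ^ (θ * Q i - 1) * Y ^ (1 - θ * Q i) := fun i => by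
      rw [Real.div_rpow (hy i).le hY.le, div_eq_mul_inv, ← Real.rpow_neg hY.le, neg_sub]
    rw [Finset.prod_congr rfl (fun i _ => key i), Finset.prod_mul_distrib,
      ← rpow_finset_sum hY]
    have hsum : (∑ i : Fin d, (1 - θ * Q i)) = (d : ℝ) - S := by
      rw [Finset.sum_sub_distrib, Finset.sum_const, card_univ, Fintype.card_fin,
        nsmul_eq_mul, mul_one, hS_def]
    rw [hsum, one_mul, one_mul,
      show Y ^ ((1:ℝ) - d) * (1 / B) * ((∏ i, (y i) ^ (θ * Q i - 1)) * Y ^ ((d:ℝ) - S))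
        = (Y ^ ((1:ℝ) - d) * Y ^ ((d:ℝ) - S)) * (1 / B) * ∏ i, (y i) ^ (θ * Q i - 1) by ring,
      ← Real.rpow_add hY, show (1:ℝ) - d + ((d:ℝ) - S) = 1 - S by ring]
    ring
  rw [hlim]
  refine hcomb.congr' ?_
  -- eventual equality
  have hev : ∀ᶠ n : ℕ in atTop, ∀ i, 0 < m n i := by
    refine Filter.eventually_all.mpr fun i => ?_
    filter_upwards [(hmi i).eventually (eventually_gt_atTop 0)] with n hn
    exact_mod_cast hn
  filter_upwards [hev, eventually_ge_atTop 1] with n hmn hn1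
  have hn0 : (0:ℝ) < n := by exact_mod_cast hn1
  have hmpos : ∀ i, (0:ℝ) < (m n i : ℝ) := fun i => by exact_mod_cast hmn i
  have hMpos : (0:ℝ) < (M n : ℝ) := by
    rw [hMcast]; exact Finset.sum_pos (fun i _ => hmpos i) univ_nonempty
  have hGa : ∀ i, (0:ℝ) < Real.Gamma ((m n i : ℝ) + θ * Q i) :=
    fun i => Real.Gamma_pos_of_pos (by have := hmpos i; have := hai i; linarith)
  have hG1 : ∀ i, (0:ℝ) < Real.Gamma ((m n i : ℝ) + 1) :=
    fun i => Real.Gamma_pos_of_pos (by have := hmpos i; linarith)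
  have hGM1 : (0:ℝ) < Real.Gamma ((M n : ℝ) + 1) := Real.Gamma_pos_of_pos (by linarith)
  have hGMS : (0:ℝ) < Real.Gamma ((M n : ℝ) + S) := Real.Gamma_pos_of_pos (by linarith)
  have hBpos : 0 < B := by
    rw [hB_def]
    unfold multiBeta
    exact div_pos (Finset.prod_pos fun i _ => Real.Gamma_pos_of_pos (hai i))
      (Real.Gamma_pos_of_pos hS)
  -- key scalar identities
  have hA : ∀ i, ((m n i : ℝ)) ^ (1 - θ * Q i) * ((m n i : ℝ) / n) ^ (θ * Q i - 1)
      = (n : ℝ) ^ (1 - θ * Q i) := fun i => by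
    rw [Real.div_rpow (hmpos i).le hn0.le, div_eq_mul_inv, ← mul_assoc,
      ← Real.rpow_add (hmpos i), show (1 - θ * Q i) + (θ * Q i - 1) = 0 by ring,
      Real.rpow_zero, one_mul, ← Real.rpow_neg hn0.le, neg_sub]
  have hB2 : ((M n : ℝ)) ^ (S - 1) * ((M n : ℝ) / n) ^ (1 - S) = (n : ℝ) ^ (S - 1) := by
    rw [Real.div_rpow hMpos.le hn0.le, div_eq_mul_inv, ← mul_assoc,
      ← Real.rpow_add hMpos, show (S - 1) + (1 - S) = 0 by ring,
      Real.rpow_zero, one_mul, ← Real.rpow_neg hn0.le, neg_sub]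
  have hC : (∏ i, ((m n i : ℝ)) ^ (1 - θ * Q i)) * ∏ i, ((m n i : ℝ) / n) ^ (θ * Q i - 1)
      = (n : ℝ) ^ ((d : ℝ) - S) := by
    rw [← Finset.prod_mul_distrib, Finset.prod_congr rfl (fun i _ => hA i),
      ← rpow_finset_sum hn0]
    congr 1
    rw [Finset.sum_sub_distrib, Finset.sum_const, card_univ, Fintype.card_fin,
      nsmul_eq_mul, mul_one, hS_def]
  have hD : (n : ℝ) ^ (S - 1) * (n : ℝ) ^ ((d : ℝ) - S) = (n : ℝ) ^ (d - 1 : ℕ) := by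
    rw [← Real.rpow_add hn0, ← Real.rpow_natCast (n : ℝ) (d - 1), Nat.cast_sub hd,
      Nat.cast_one]
    ring_nf
  -- rewrite pimSamplingProb
  have hfac : ((Nat.factorial (∑ i, m n i) : ℝ)) = Real.Gamma ((M n : ℝ) + 1) := by
    rw [hM_def, ← Real.Gamma_nat_eq_factorial]
  have hfaci : (∏ i, ((Nat.factorial (m n i)) : ℝ)) = ∏ i, Real.Gamma ((m n i : ℝ) + 1) :=
    Finset.prod_congr rfl fun i _ => (Real.Gamma_nat_eq_factorial _).symm
  have hsumMB : (∑ i, ((m n i : ℝ) + θ * Q i)) = (M n : ℝ) + S := by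
    rw [Finset.sum_add_distrib, ← hMcast, hS_def]
  have hpim : pimSamplingProb θ Q (m n)
      = Real.Gamma ((M n : ℝ) + 1) / (∏ i, Real.Gamma ((m n i : ℝ) + 1)) *
        ((∏ i, Real.Gamma ((m n i : ℝ) + θ * Q i)) / Real.Gamma ((M n : ℝ) + S) / B) := by
    rw [pimSamplingProb, hfac, hfaci, hB_def]
    congr 1
    rw [multiBeta, hsumMB]
  -- final computation
  rw [hpim, Finset.prod_mul_distrib, Finset.prod_div_distrib]
  have hPa : (0:ℝ) < ∏ i, Real.Gamma ((m n i : ℝ) + θ * Q i) :=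
    Finset.prod_pos fun i _ => hGa i
  have hP1 : (0:ℝ) < ∏ i, Real.Gamma ((m n i : ℝ) + 1) :=
    Finset.prod_pos fun i _ => hG1 i
  calc (1 / B) * (Real.Gamma ((M n : ℝ) + 1) / Real.Gamma ((M n : ℝ) + S) * (M n : ℝ) ^ (S - 1) *
        ((∏ i, Real.Gamma ((m n i : ℝ) + θ * Q i)) / (∏ i, Real.Gamma ((m n i : ℝ) + 1)) *
          (∏ i, ((m n i : ℝ)) ^ (1 - θ * Q i)) *
        (((M n : ℝ) / n) ^ (1 - S) * ∏ i, ((m n i : ℝ) / n) ^ (θ * Q i - 1))))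
      = (1 / B) * (Real.Gamma ((M n : ℝ) + 1) / Real.Gamma ((M n : ℝ) + S)) *
        ((∏ i, Real.Gamma ((m n i : ℝ) + θ * Q i)) / (∏ i, Real.Gamma ((m n i : ℝ) + 1))) *
        (((M n : ℝ)) ^ (S - 1) * (((M n : ℝ) / n) ^ (1 - S))) *
        ((∏ i, ((m n i : ℝ)) ^ (1 - θ * Q i)) * ∏ i, ((m n i : ℝ) / n) ^ (θ * Q i - 1)) := by
        ring
    _ = (1 / B) * (Real.Gamma ((M n : ℝ) + 1) / Real.Gamma ((M n : ℝ) + S)) *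
        ((∏ i, Real.Gamma ((m n i : ℝ) + θ * Q i)) / (∏ i, Real.Gamma ((m n i : ℝ) + 1))) *
        ((n : ℝ) ^ (S - 1)) * ((n : ℝ) ^ ((d : ℝ) - S)) := by rw [hB2, hC]
    _ = (1 / B) * (Real.Gamma ((M n : ℝ) + 1) / Real.Gamma ((M n : ℝ) + S)) *
        ((∏ i, Real.Gamma ((m n i : ℝ) + θ * Q i)) / (∏ i, Real.Gamma ((m n i : ℝ) + 1))) *
        ((n : ℝ) ^ (d - 1 : ℕ)) := by rw [mul_assoc, hD]
    _ = (n : ℝ) ^ (d - 1 : ℕ) * (Real.Gamma ((M n : ℝ) + 1) / (∏ i, Real.Gamma ((m n i : ℝ) + 1)) *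
        ((∏ i, Real.Gamma ((m n i : ℝ) + θ * Q i)) / Real.Gamma ((M n : ℝ) + S) / B)) := by
        field_simp
end

section
/- Let α ∈ ℝ_{>0}^d and define the d×d matrix Σ(α) with entries Σ_{ij}(α) = (α_i/‖α‖³)(δ_{ij}‖α‖ − α_j), where ‖α‖ = ∑_k α_k. Then the determinant of the (d−1)×(d−1) restriction Σ_{d-1}(α) (deleting the last row and column) equals (∏_{i=1}^d α_i/‖α‖) · ‖α‖^{-(d-1)}. -/
/-!
`Σ(α)` factors as `diag(αᵢ/‖α‖²) · (I − 𝟙 αᵀ/‖α‖)`, so by the matrix determinant lemma the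
determinant of its restriction is `∏_{i<d} (αᵢ/‖α‖²) · (1 − ∑_{i<d} αᵢ/‖α‖)`, and the last
factor is `α_d/‖α‖`.
-/

open Finset

namespace Matrix

variable {ι K : Type*} [Fintype ι] [DecidableEq ι] [Field K]

/-- The paper's `Σ(α)`, with the total mass `‖α‖` made a free parameter `s`. -/
def dirichletCovariance (a : ι → K) (s : K) : Matrix ι ι K :=
  of fun i j => a i / s ^ 3 * ((if i = j then s else 0) - a j)

theorem dirichletCovariance_eq_diagonal_mul (a : ι → K) (s : K) :
    dirichletCovariance a s =
      diagonal (fun i => a i / s ^ 2) * (1 + vecMulVec (fun _ => -1) (fun j => a j / s)) := by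
  ext i j
  rw [diagonal_mul, add_apply, vecMulVec_apply, dirichletCovariance, of_apply, one_apply]
  by_cases hs : s = 0
  · simp [hs]
  · split_ifs <;> field_simp <;> ring

theorem det_dirichletCovariance (a : ι → K) (s : K) :
    (dirichletCovariance a s).det = (∏ i, a i / s ^ 2) * (1 - (∑ i, a i) / s) := by
  rw [dirichletCovariance_eq_diagonal_mul, det_mul, vecMulVec_eq Unit,
    det_one_add_replicateCol_mul_replicateRow, det_diagonal, dotProduct, sum_div]
  simp only [mul_neg_one, sum_neg_distrib, sub_eq_add_neg]

end Matrix

theorem det_dirichlet_limit_covariance_general (d : ℕ)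
    (α : Fin d → ℝ) (hα : ∀ i, 0 < α i) :
    Matrix.det
      (Matrix.of (fun i j : Fin (d - 1) =>
        (α (Fin.castLE (Nat.sub_le d 1) i) / (∑ k, α k) ^ 3) *
          ((if i = j then (∑ k, α k) else 0) - α (Fin.castLE (Nat.sub_le d 1) j)))) =
    (∏ i, α i / ∑ k, α k) / (∑ k, α k) ^ (d - 1) := by
  cases d with
  | zero => simp
  | succ n =>
    set s := ∑ k, α k with hs_def
    have hs : s ≠ 0 := (sum_pos (fun i _ => hα i) univ_nonempty).ne'
    have hlast : 1 - (∑ i : Fin n, α i.castSucc) / s = α (Fin.last n) / s := by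
      have hsum : ∑ i : Fin n, α i.castSucc = s - α (Fin.last n) := by
        rw [hs_def, Fin.sum_univ_castSucc]
        ring
      rw [hsum]
      field_simp
      ring
    change (Matrix.dirichletCovariance (fun i : Fin n => α i.castSucc) s).det = _
    rw [Matrix.det_dirichletCovariance, hlast, Fin.prod_univ_castSucc, Nat.add_sub_cancel,
      prod_div_distrib, prod_div_distrib, prod_const, prod_const, card_univ, Fintype.card_fin]
    field_simp
    ring

/-- the determinant of the restriction to the first `d−1` coordinates of
`Σᵢⱼ(α) = (αᵢ/‖α‖³)(δᵢⱼ‖α‖ − αⱼ)` equals `(∏ᵢ αᵢ/‖α‖) ‖α‖^{-(d-1)}`. -/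
theorem det_dirichlet_limit_covariance (d : ℕ) (hd : 1 ≤ d)
    (α : Fin d → ℝ) (hα : ∀ i, 0 < α i) :
    Matrix.det
      (Matrix.of (fun i j : Fin (d - 1) =>
        (α (Fin.castLE (Nat.sub_le d 1) i) / (∑ k, α k) ^ 3) *
          ((if i = j then (∑ k, α k) else 0) - α (Fin.castLE (Nat.sub_le d 1) j)))) =
    (∏ i, α i / ∑ k, α k) / (∑ k, α k) ^ (d - 1) :=
  det_dirichlet_limit_covariance_general d α hα
end

section
/- Let y^{(n)} ∈ ℝ_{>0}^d with y^{(n)} → y ∈ ℝ_{>0}^d and n y^{(n)} ∈ ℕ^d. Then the quantity Γ(n‖y^{(n)}‖ + d) / ∏_{i=1}^d Γ(n y^{(n)}_i + 1), multiplied by ε^{n y^{(n)}_min} for any ε satisfying 0 < ε < ∏_{i=1}^d (y_i/‖y‖)^{y_i/y_min}, converges to 0 as n → ∞, where y_min = min_i y_i and y^{(n)}_min = min_i y^{(n)}_i. -/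
/-!
Write `mᵢ = n yᵢ⁽ⁿ⁾` and `M = ∑ mᵢ`. The Gamma quotient is `(M + d - 1)! / ∏ mᵢ!`, at most
`(M + d)^(d-1)` times the multinomial coefficient `M! / ∏ mᵢ!`, and the multinomial theorem
bounds the latter by `M^M / ∏ mᵢ^mᵢ = exp (n ∑ yᵢ⁽ⁿ⁾ log (‖y⁽ⁿ⁾‖ / yᵢ⁽ⁿ⁾))`. Hence the whole
expression is a polynomial in `n` times `exp (n cₙ)`, where
`cₙ → y_min log ε + ∑ yᵢ log (‖y‖ / yᵢ)`, and the bound on `ε` says exactly that this limit is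
negative.
-/

open Finset Filter Real Topology
open scoped Nat

/-- `‖x‖` times the Shannon entropy of the probability vector `x / ‖x‖`. -/
noncomputable def unnormalizedEntropy {ι : Type*} [Fintype ι] (x : ι → ℝ) : ℝ :=
  ∑ i, x i * log ((∑ j, x j) / x i)

theorem Nat.factorial_add_le (n k : ℕ) : (n + k)! ≤ n ! * (n + k) ^ k := by
  rw [← Nat.factorial_mul_ascFactorial]
  exact Nat.mul_le_mul_left _ (Nat.ascFactorial_le_pow_add n k)

section
variable {ι : Type*} [Fintype ι]

theorem Nat.multinomial_mul_prod_pow_le [DecidableEq ι] (m : ι → ℕ) :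
    Nat.multinomial univ m * ∏ i, m i ^ m i ≤ (∑ i, m i) ^ ∑ i, m i := by
  rw [Finset.sum_pow_eq_sum_piAntidiag]
  exact Finset.single_le_sum (f := fun k => Nat.multinomial univ k * ∏ i, m i ^ k i)
    (fun _ _ => Nat.zero_le _) (by simp [mem_piAntidiag])

lemma unnormalizedEntropy_const_mul (c : ℝ) (x : ι → ℝ) :
    unnormalizedEntropy (fun i => c * x i) = c * unnormalizedEntropy x := by
  rcases eq_or_ne c 0 with rfl | hc
  · simp [unnormalizedEntropy]
  simp only [unnormalizedEntropy, ← Finset.mul_sum, mul_div_mul_left _ _ hc, mul_assoc]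

lemma log_prod_div_sum_rpow {y : ι → ℝ} (hy : ∀ i, 0 < y i) (t : ℝ) :
    log (∏ i, (y i / ∑ j, y j) ^ (y i / t)) = -unnormalizedEntropy y / t := by
  have hpos (i : ι) : 0 < y i / ∑ j, y j :=
    div_pos (hy i) (sum_pos (fun j _ => hy j) ⟨i, mem_univ i⟩)
  rw [log_prod fun i _ => (rpow_pos_of_pos (hpos i) _).ne', unnormalizedEntropy, neg_div,
    Finset.sum_div, ← Finset.sum_neg_distrib]
  refine Finset.sum_congr rfl fun i _ => ?_
  rw [log_rpow (hpos i), ← inv_div (∑ j, y j), log_inv]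
  ring

lemma continuousAt_unnormalizedEntropy {y : ι → ℝ} (hy : ∀ i, 0 < y i) :
    ContinuousAt unnormalizedEntropy y := by
  have hcoord (i : ι) : ContinuousAt (fun x : ι → ℝ => x i) y := (continuous_apply i).continuousAt
  have hsum : ContinuousAt (fun x : ι → ℝ => ∑ j, x j) y :=
    (continuous_finsetSum _ fun j _ => continuous_apply j).continuousAt
  exact tendsto_finsetSum _ fun i _ => (hcoord i).mul ((hsum.div (hcoord i) (hy i).ne').log
    (div_pos (sum_pos (fun j _ => hy j) ⟨i, mem_univ i⟩) (hy i)).ne')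

lemma exp_unnormalizedEntropy_natCast (m : ι → ℕ) :
    exp (unnormalizedEntropy fun i => (m i : ℝ)) =
      ((∑ i, m i : ℕ) : ℝ) ^ (∑ i, m i) / ∏ i, (m i : ℝ) ^ m i := by
  rw [unnormalizedEntropy, exp_sum, ← prod_pow_eq_pow_sum, ← prod_div_distrib]
  refine Finset.prod_congr rfl fun i _ => ?_
  rcases Nat.eq_zero_or_pos (m i) with h | h
  · simp [h]
  have hsum : 0 < ∑ j, m j := sum_pos' (fun j _ => Nat.zero_le _) ⟨i, mem_univ i, h⟩
  rw [exp_nat_mul, ← Nat.cast_sum, exp_log (by positivity), div_pow]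

lemma factorial_sum_div_prod_factorial_le (m : ι → ℕ) :
    ((∑ i, m i)! : ℝ) / ∏ i, ((m i)! : ℝ) ≤ exp (unnormalizedEntropy fun i => (m i : ℝ)) := by
  classical
  have hpow : (0 : ℝ) < ∏ i, (m i : ℝ) ^ m i := by
    exact_mod_cast prod_pos fun i _ => Nat.pow_self_pos
  rw [← Nat.multinomial_spec, Nat.cast_mul, Nat.cast_prod, mul_div_cancel_left₀ _ (by positivity),
    exp_unnormalizedEntropy_natCast, le_div_iff₀ hpow]
  exact_mod_cast Nat.multinomial_mul_prod_pow_le m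

lemma gamma_sum_add_div_prod_gamma_le (m : ι → ℕ) (k : ℕ) :
    Gamma (∑ i, (m i : ℝ) + k + 1) / ∏ i, Gamma ((m i : ℝ) + 1) ≤
      (∑ i, (m i : ℝ) + k) ^ k * exp (unnormalizedEntropy fun i => (m i : ℝ)) := by
  set M := ∑ i, m i
  have hcast : ∑ i, (m i : ℝ) + k = ((M + k : ℕ) : ℝ) := by push_cast [M]; rfl
  simp only [hcast, Gamma_nat_eq_factorial]
  calc ((M + k)! : ℝ) / ∏ i, ((m i)! : ℝ)
      ≤ (M ! * ((M + k : ℕ) : ℝ) ^ k) / ∏ i, ((m i)! : ℝ) := by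
        gcongr
        exact_mod_cast Nat.factorial_add_le M k
    _ = ((M + k : ℕ) : ℝ) ^ k * ((M ! : ℝ) / ∏ i, ((m i)! : ℝ)) := by ring
    _ ≤ _ := by gcongr; exact factorial_sum_div_prod_factorial_le m

lemma gamma_mul_sum_add_div_prod_gamma_nonneg (x : ι → ℝ) {n : ℕ}
    (hx : ∀ i, ∃ m : ℕ, (n : ℝ) * x i = m) (k : ℕ) :
    0 ≤ Gamma (n * ∑ i, x i + (k + 1)) / ∏ i, Gamma (n * x i + 1) := by
  have hnonneg (i : ι) : 0 ≤ (n : ℝ) * x i := by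
    obtain ⟨m, hm⟩ := hx i; rw [hm]; positivity
  have hsum : 0 ≤ (n : ℝ) * ∑ i, x i := by
    rw [mul_sum]; exact sum_nonneg fun i _ => hnonneg i
  exact div_nonneg (Gamma_nonneg_of_nonneg (by positivity))
    (prod_nonneg fun i _ => Gamma_nonneg_of_nonneg (by linarith [hnonneg i]))

lemma gamma_mul_sum_add_div_prod_gamma_le (x : ι → ℝ) {n : ℕ} (hn : 1 ≤ n)
    (hx : ∀ i, ∃ m : ℕ, (n : ℝ) * x i = m) (k : ℕ) :
    Gamma (n * ∑ i, x i + (k + 1)) / ∏ i, Gamma (n * x i + 1) ≤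
      (∑ i, x i + k) ^ k * ((n : ℝ) ^ k * exp (n * unnormalizedEntropy x)) := by
  choose m hm using hx
  have hn' : (1 : ℝ) ≤ n := by exact_mod_cast hn
  have hsum : (n : ℝ) * ∑ i, x i = ∑ i, (m i : ℝ) := by
    rw [mul_sum]; exact sum_congr rfl fun i _ => hm i
  have hent : (n : ℝ) * unnormalizedEntropy x = unnormalizedEntropy fun i => (m i : ℝ) := by
    rw [← unnormalizedEntropy_const_mul]; simp only [hm]
  have hbase : ∑ i, (m i : ℝ) + k ≤ n * (∑ i, x i + k) := by
    rw [mul_add, hsum]; nlinarith [(k.cast_nonneg : (0 : ℝ) ≤ k)]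
  rw [← add_assoc, hsum, hent, ← mul_assoc, ← mul_pow, mul_comm (∑ i, x i + k)]
  simp only [hm]
  exact (gamma_sum_add_div_prod_gamma_le m k).trans (by gcongr)
end

lemma tendsto_pow_mul_exp_mul_of_tendsto_neg (k : ℕ) {a : ℕ → ℝ} {c : ℝ}
    (ha : Tendsto a atTop (𝓝 c)) (hc : c < 0) :
    Tendsto (fun n : ℕ => (n : ℝ) ^ k * exp (n * a n)) atTop (𝓝 0) := by
  have hdecay : Tendsto (fun n : ℕ => (n : ℝ) ^ k * exp (-(-c / 2) * n)) atTop (𝓝 0) := by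
    simpa [Function.comp_def, rpow_natCast] using
      (tendsto_rpow_mul_exp_neg_mul_atTop_nhds_zero k (-c / 2) (by linarith)).comp
        tendsto_natCast_atTop_atTop
  refine squeeze_zero' (Eventually.of_forall fun n => by positivity) ?_ hdecay
  filter_upwards [ha.eventually_le_const (show c < c / 2 by linarith)] with n hn
  refine mul_le_mul_of_nonneg_left (exp_le_exp.2 ?_) (by positivity)
  nlinarith [(n.cast_nonneg : (0 : ℝ) ≤ n)]

theorem tail_bound_general (d : ℕ) [NeZero d]
    (y : Fin d → ℝ) (hy : ∀ i, 0 < y i)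
    (yseq : ℕ → Fin d → ℝ)
    (hnat : ∀ (n : ℕ) i, ∃ m : ℕ, (n : ℝ) * yseq n i = m)
    (hconv : ∀ i, Tendsto (fun n : ℕ => yseq n i) atTop (nhds (y i)))
    (ε : ℝ) (hε : 0 < ε)
    (hεlt : ε < ∏ i, (y i / ∑ j, y j) ^ (y i / (Finset.univ.inf' Finset.univ_nonempty y))) :
    Tendsto
      (fun n : ℕ =>
        ε ^ ((n : ℝ) * Finset.univ.inf' Finset.univ_nonempty (yseq n)) *
          (Real.Gamma ((n : ℝ) * (∑ i, yseq n i) + d) /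
            ∏ i, Real.Gamma ((n : ℝ) * yseq n i + 1)))
      atTop (nhds 0) := by
  obtain ⟨k, rfl⟩ : ∃ k, d = k + 1 := ⟨d - 1, (Nat.succ_pred_eq_of_pos (NeZero.pos d)).symm⟩
  set ymin := univ.inf' univ_nonempty y
  set rate : ℕ → ℝ := fun n =>
    univ.inf' univ_nonempty (yseq n) * log ε + unnormalizedEntropy (yseq n)
  have hrate : Tendsto rate atTop (𝓝 (ymin * log ε + unnormalizedEntropy y)) :=
    ((Tendsto.finset_inf'_nhds_apply _ fun i _ => hconv i).mul_const _).add
      ((continuousAt_unnormalizedEntropy hy).tendsto.comp (tendsto_pi_nhds.2 hconv))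
  have hneg : ymin * log ε + unnormalizedEntropy y < 0 := by
    have hymin : 0 < ymin := (lt_inf'_iff _).2 fun i _ => hy i
    have := log_lt_log hε hεlt
    rw [log_prod_div_sum_rpow hy, lt_div_iff₀ hymin] at this
    linarith
  have hpoly : Tendsto (fun n => (∑ i, yseq n i + k) ^ k) atTop (𝓝 ((∑ i, y i + k) ^ k)) :=
    ((tendsto_finsetSum _ fun i _ => hconv i).add_const _).pow k
  refine squeeze_zero' (Eventually.of_forall fun n => ?_)
    ((eventually_ge_atTop 1).mono fun n hn => ?_)
    (by simpa using hpoly.mul (tendsto_pow_mul_exp_mul_of_tendsto_neg k hrate hneg))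
  · push_cast
    exact mul_nonneg (rpow_nonneg hε.le _)
      (gamma_mul_sum_add_div_prod_gamma_nonneg (yseq n) (hnat n) k)
  · push_cast
    refine (mul_le_mul_of_nonneg_left (gamma_mul_sum_add_div_prod_gamma_le (yseq n) hn (hnat n) k)
      (rpow_nonneg hε.le _)).trans_eq ?_
    rw [rpow_def_of_pos hε, mul_comm (log ε), mul_assoc]
    simp only [rate, mul_add, exp_add]
    ring

/-- for `y⁽ⁿ⁾ → y ∈ ℝ_{>0}^d` with `n y⁽ⁿ⁾ ∈ ℕ^d` and any
`0 < ε < ∏ᵢ (yᵢ/‖y‖)^{yᵢ/y_min}`, the quantity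
`ε^{n y⁽ⁿ⁾_min} Γ(n‖y⁽ⁿ⁾‖ + d) / ∏ᵢ Γ(n yᵢ⁽ⁿ⁾ + 1)` converges to `0`. -/
theorem tail_bound (d : ℕ) [NeZero d]
    (y : Fin d → ℝ) (hy : ∀ i, 0 < y i)
    (yseq : ℕ → Fin d → ℝ) (hyseq : ∀ (n : ℕ) i, 0 < yseq n i)
    (hnat : ∀ (n : ℕ) i, ∃ m : ℕ, (n : ℝ) * yseq n i = m)
    (hconv : ∀ i, Tendsto (fun n : ℕ => yseq n i) atTop (nhds (y i)))
    (ε : ℝ) (hε : 0 < ε)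
    (hεlt : ε < ∏ i, (y i / ∑ j, y j) ^ (y i / (Finset.univ.inf' Finset.univ_nonempty y))) :
    Tendsto
      (fun n : ℕ =>
        ε ^ ((n : ℝ) * Finset.univ.inf' Finset.univ_nonempty (yseq n)) *
          (Real.Gamma ((n : ℝ) * (∑ i, yseq n i) + d) /
            ∏ i, Real.Gamma ((n : ℝ) * yseq n i + 1)))
      atTop (nhds 0) :=
  tail_bound_general d y hy yseq hnat hconv ε hε hεlt
end

section
/- Let y^{(n)} ∈ ℝ_{>0}^d with n y^{(n)} ∈ ℕ^d and y^{(n)} → y ∈ ℝ_{>0}^d, and let φ_n be the normalized Dirichlet densities with parameters n y^{(n)} + 𝟙, so that ‖φ_n‖_∞ = n^{-(d-1)/2} (1/B(n y^{(n)} + 𝟙)) ∏_{i=1}^d (n y^{(n)}_i/(n‖y^{(n)}‖ + d − d))^{n y^{(n)}_i}. Then ‖φ_n‖_∞ converges to ((2π)^{d-1} ∏_{i=1}^d (y_i/‖y‖) · ‖y‖^{-(d-1)})^{-1/2} as n → ∞. -/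
open Finset Filter Real Stirling

lemma fact_shift (S k : ℕ) : ((Nat.factorial (S + k) : ℕ) : ℝ) =
    (∏ j ∈ Finset.range k, ((S:ℝ) + j + 1)) * (Nat.factorial S : ℝ) := by
  induction k with
  | zero => simp
  | succ k ih =>
      have h : S + (k+1) = (S + k) + 1 := by omega
      rw [h, Nat.factorial_succ, Finset.prod_range_succ]
      push_cast
      rw [ih]; ring

lemma fact_stirling {m : ℕ} (hm : 1 ≤ m) :
    (Nat.factorial m : ℝ) = stirlingSeq m * (Real.sqrt (2*m) * ((m:ℝ) / Real.exp 1) ^ m) := by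
  have h0 : (0:ℝ) < m := by exact_mod_cast hm
  rw [stirlingSeq, div_mul_cancel₀]
  positivity

lemma stirling_pos {m : ℕ} (hm : 1 ≤ m) : 0 < stirlingSeq m := by
  rw [stirlingSeq]
  have : (0:ℝ) < m := by exact_mod_cast hm
  positivity

lemma pow_book (ν sn : ℝ) (hν : 0 < ν) (hsn : 0 < sn) (d : ℕ) (hd : 1 ≤ d) :
    ν ^ (-((d:ℝ)-1)/2) * (ν*sn)^(d-1) * Real.sqrt (2*ν) =
      (2:ℝ)^(-((d:ℝ)-1)/2) * sn^((d:ℝ)-1) * (Real.sqrt (2*ν))^d := by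
  have h2ν : (0:ℝ) < 2*ν := by linarith
  have hlm : Real.log (2*ν) = Real.log 2 + Real.log ν := Real.log_mul two_ne_zero hν.ne'
  apply Real.log_injOn_pos (Set.mem_Ioi.2 (by positivity)) (Set.mem_Ioi.2 (by positivity))
  rw [Real.log_mul (by positivity) (by positivity), Real.log_mul (by positivity) (by positivity),
    Real.log_mul (by positivity) (by positivity), Real.log_mul (by positivity) (by positivity),
    Real.log_rpow hν, Real.log_rpow two_pos, Real.log_rpow hsn, Real.log_pow, Real.log_pow,
    Real.log_mul (by positivity) (by positivity)]
  simp only [Real.log_sqrt h2ν.le, hlm]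
  push_cast [Nat.cast_sub hd]
  ring

lemma key_eq (d : ℕ) (hd : 1 ≤ d) (n : ℕ) (hn : 1 ≤ n) (yv : Fin d → ℝ) (hyv : ∀ i, 0 < yv i)
    (A : Fin d → ℕ) (hA : ∀ i, (n:ℝ) * yv i = A i) :
    (n : ℝ) ^ (-((d : ℝ) - 1) / 2) *
      (1 / multiBeta (fun i => (n : ℝ) * yv i + 1)) *
      ∏ i, ((n : ℝ) * yv i / ((n : ℝ) * (∑ j, yv j) + d - d)) ^ ((n : ℝ) * yv i)
    = (∏ j ∈ Finset.range (d-1), (1 + ((j:ℝ)+1)/((n:ℝ) * ∑ i, yv i))) *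
      (stirlingSeq (∑ i, A i) / ∏ i, stirlingSeq (A i)) *
      ((2:ℝ)^(-((d:ℝ)-1)/2) * (∑ i, yv i)^((d:ℝ)-1) *
        (Real.sqrt (∑ i, yv i) / ∏ i, Real.sqrt (yv i))) := by
  have hν : (0:ℝ) < n := by exact_mod_cast hn
  set sn : ℝ := ∑ i, yv i with hsn_def
  have hsn : 0 < sn := Finset.sum_pos (fun i _ => hyv i) ⟨⟨0, hd⟩, Finset.mem_univ _⟩
  set S : ℕ := ∑ i, A i with hS_def
  have hApos : ∀ i, (0:ℝ) < A i := fun i => by rw [← hA i]; exact mul_pos (by exact_mod_cast hn) (hyv i)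
  have hA1 : ∀ i, 1 ≤ A i := fun i => Nat.cast_pos.mp (hApos i)
  have hSr : (S:ℝ) = n * sn := by
    rw [hS_def, hsn_def]
    push_cast
    rw [Finset.mul_sum]
    exact Finset.sum_congr rfl (fun i _ => (hA i).symm)
  have hS1 : 1 ≤ S := le_trans (hA1 ⟨0, hd⟩) (Finset.single_le_sum (f := fun i => A i)
    (fun i _ => Nat.zero_le _) (Finset.mem_univ _))
  have hσ : (0:ℝ) < S := by exact_mod_cast hS1
  -- Step A : multiBeta
  have stepA : multiBeta (fun i => (n : ℝ) * yv i + 1)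
      = (∏ i, (Nat.factorial (A i) : ℝ)) / (Nat.factorial (S + d - 1) : ℝ) := by
    rw [multiBeta]
    congr 1
    · exact Finset.prod_congr rfl (fun i _ => by rw [hA i, Real.Gamma_nat_eq_factorial])
    · have h1 : ∑ i, ((n : ℝ) * yv i + 1) = (S:ℝ) + d := by
        rw [Finset.sum_add_distrib, Finset.sum_const, Finset.card_univ, Fintype.card_fin,
          hSr, hsn_def, Finset.mul_sum, nsmul_eq_mul, mul_one]
      have h2 : (S:ℝ) + d = ((S + d - 1 : ℕ) : ℝ) + 1 := by
        have h3 : S + d - 1 + 1 = S + d := by omega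
        rw [show ((S:ℝ) + d) = ((S + d : ℕ) : ℝ) by push_cast; ring, ← h3]
        push_cast
        ring
      rw [h1, h2, Real.Gamma_nat_eq_factorial]
  -- Step B : the product
  have stepB : (∏ i, ((n : ℝ) * yv i / ((n : ℝ) * (∑ j, yv j) + d - d)) ^ ((n : ℝ) * yv i))
      = ∏ i, (((A i):ℝ) / (S:ℝ)) ^ (A i) := by
    refine Finset.prod_congr rfl (fun i _ => ?_)
    rw [add_sub_cancel_right, hA i, ← hsn_def, ← hSr, Real.rpow_natCast]
  set c2ν : ℝ := Real.sqrt (2*(n:ℝ)) with hc2ν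
  have hc2νpos : 0 < c2ν := Real.sqrt_pos.2 (by positivity)
  set C1 : ℝ := ∏ i, stirlingSeq (A i) with hC1
  have hC1pos : 0 < C1 := Finset.prod_pos (fun i _ => stirling_pos (hA1 i))
  set C3 : ℝ := ∏ i, ((A i : ℝ)) ^ (A i) with hC3
  have hC3pos : 0 < C3 := Finset.prod_pos (fun i _ => pow_pos (hApos i) _)
  set Cy : ℝ := ∏ i, Real.sqrt (yv i) with hCy
  have hCypos : 0 < Cy := Finset.prod_pos (fun i _ => Real.sqrt_pos.2 (hyv i))
  set P : ℝ := ∏ j ∈ Finset.range (d-1), (1 + ((j:ℝ)+1)/((n:ℝ) * sn)) with hP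
  have hPpos : 0 < P := Finset.prod_pos (fun j _ => by positivity)
  have hstS : 0 < stirlingSeq S := stirling_pos hS1
  have hfS : (Nat.factorial S : ℝ) = stirlingSeq S * (c2ν * Real.sqrt sn * ((S:ℝ)^S / Real.exp 1 ^ S)) := by
    rw [fact_stirling hS1, div_pow]
    congr 2
    rw [hc2ν, ← Real.sqrt_mul (by positivity), hSr]
    ring_nf
  have hprodfact : ∏ i, (Nat.factorial (A i) : ℝ) = C1 * (c2ν^d * Cy) * (C3 / Real.exp 1 ^ S) := by
    calc ∏ i, (Nat.factorial (A i) : ℝ)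
        = ∏ i, (stirlingSeq (A i) * ((c2ν * Real.sqrt (yv i)) * ((A i:ℝ)^(A i) / Real.exp 1 ^ (A i)))) := by
          refine Finset.prod_congr rfl (fun i _ => ?_)
          rw [fact_stirling (hA1 i), div_pow]
          congr 2
          rw [hc2ν, ← Real.sqrt_mul (by positivity), ← hA i]
          ring_nf
      _ = C1 * ((∏ i, (c2ν * Real.sqrt (yv i))) * (∏ i, ((A i:ℝ)^(A i) / Real.exp 1 ^ (A i)))) := by
          rw [Finset.prod_mul_distrib, Finset.prod_mul_distrib]
      _ = _ := by
          rw [Finset.prod_mul_distrib, Finset.prod_const, Finset.card_univ, Fintype.card_fin,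
            Finset.prod_div_distrib, Finset.prod_pow_eq_pow_sum]
          ring
  have hlast : ∏ i, ((A i:ℝ)/(S:ℝ)) ^ (A i) = C3 / (S:ℝ)^S := by
    simp_rw [div_pow]
    rw [Finset.prod_div_distrib, Finset.prod_pow_eq_pow_sum]
  have hshift : (Nat.factorial (S + d - 1) : ℝ) = ((n:ℝ)*sn)^(d-1) * P * (Nat.factorial S : ℝ) := by
    have h4 : S + d - 1 = S + (d-1) := by omega
    rw [h4, fact_shift]
    congr 1
    calc ∏ j ∈ Finset.range (d-1), ((S:ℝ) + j + 1)
        = ∏ j ∈ Finset.range (d-1), (((n:ℝ)*sn) * (1 + ((j:ℝ)+1)/((n:ℝ)*sn))) := by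
          refine Finset.prod_congr rfl (fun j _ => ?_)
          rw [hSr]
          field_simp
          ring
      _ = ((n:ℝ)*sn)^(d-1) * P := by
          rw [Finset.prod_mul_distrib, Finset.prod_const, Finset.card_range]
  rw [stepA, stepB, hlast, hshift, hfS, hprodfact]
  have hb := pow_book (n:ℝ) sn hν hsn d hd
  rw [← hc2ν] at hb
  have hE : Real.exp 1 ^ S ≠ 0 := by positivity
  have hσS : ((S:ℝ))^S ≠ 0 := by positivity
  calc (n:ℝ) ^ (-((d:ℝ)-1)/2) *
        (1 / (C1 * (c2ν^d * Cy) * (C3 / Real.exp 1 ^ S) /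
          (((n:ℝ)*sn)^(d-1) * P * (stirlingSeq S * (c2ν * Real.sqrt sn * ((S:ℝ)^S / Real.exp 1 ^ S)))))) *
        (C3 / (S:ℝ)^S)
      = ((n:ℝ) ^ (-((d:ℝ)-1)/2) * ((n:ℝ)*sn)^(d-1) * c2ν) *
          (P * stirlingSeq S * Real.sqrt sn / (C1 * Cy * c2ν^d)) := by
        field_simp
    _ = ((2:ℝ)^(-((d:ℝ)-1)/2) * sn^((d:ℝ)-1) * c2ν^d) *
          (P * stirlingSeq S * Real.sqrt sn / (C1 * Cy * c2ν^d)) := by rw [hb]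
    _ = P * (stirlingSeq S / C1) * ((2:ℝ)^(-((d:ℝ)-1)/2) * sn^((d:ℝ)-1) * (Real.sqrt sn / Cy)) := by
        field_simp

lemma limit_const (d : ℕ) (hd : 1 ≤ d) (s p : ℝ) (hs : 0 < s) (hp : 0 < p) :
    ((2*Real.pi)^((d:ℝ)-1) * (p / s^d) * s^(-((d:ℝ)-1)))^(-(1:ℝ)/2)
      = 1 * (Real.sqrt Real.pi / (Real.sqrt Real.pi)^d) *
        ((2:ℝ)^(-((d:ℝ)-1)/2) * s^((d:ℝ)-1) * (Real.sqrt s / Real.sqrt p)) := by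
  have hπ := Real.pi_pos
  have h2π : (0:ℝ) < 2*Real.pi := by linarith
  rw [one_mul]
  apply Real.log_injOn_pos (Set.mem_Ioi.2 (by positivity)) (Set.mem_Ioi.2 (by positivity))
  rw [Real.log_rpow (by positivity), Real.log_mul (by positivity) (by positivity),
    Real.log_mul (by positivity) (by positivity), Real.log_rpow h2π, Real.log_rpow hs,
    Real.log_div (by positivity) (by positivity), Real.log_pow,
    Real.log_mul two_ne_zero hπ.ne',
    Real.log_mul (by positivity) (by positivity), Real.log_div (by positivity) (by positivity),
    Real.log_pow, Real.log_mul (by positivity) (by positivity),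
    Real.log_mul (by positivity) (by positivity), Real.log_rpow two_pos, Real.log_rpow hs,
    Real.log_div (by positivity) (by positivity)]
  simp only [Real.log_sqrt hπ.le, Real.log_sqrt hs.le, Real.log_sqrt hp.le]
  ring

/-- convergence of the sup norms of the rescaled Dirichlet densities:
`‖φₙ‖_∞ = n^{-(d-1)/2} (1/B(n y⁽ⁿ⁾ + 𝟙)) ∏ᵢ (n yᵢ⁽ⁿ⁾/(n‖y⁽ⁿ⁾‖ + d − d))^{n yᵢ⁽ⁿ⁾}`
converges to `((2π)^{d-1} ∏ᵢ (yᵢ/‖y‖) · ‖y‖^{-(d-1)})^{-1/2}`. -/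
theorem dirichlet_density_sup_norm_limit (d : ℕ) (hd : 1 ≤ d)
    (y : Fin d → ℝ) (hy : ∀ i, 0 < y i)
    (yseq : ℕ → Fin d → ℝ) (hyseq : ∀ (n : ℕ) i, 0 < yseq n i)
    (hnat : ∀ (n : ℕ) i, ∃ m : ℕ, (n : ℝ) * yseq n i = m)
    (hconv : ∀ i, Tendsto (fun n : ℕ => yseq n i) atTop (nhds (y i))) :
    Tendsto
      (fun n : ℕ =>
        (n : ℝ) ^ (-((d : ℝ) - 1) / 2) *
          (1 / multiBeta (fun i => (n : ℝ) * yseq n i + 1)) *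
          ∏ i, ((n : ℝ) * yseq n i / ((n : ℝ) * (∑ j, yseq n j) + d - d)) ^
            ((n : ℝ) * yseq n i))
      atTop
      (nhds (((2 * Real.pi) ^ ((d : ℝ) - 1) * (∏ i, y i / ∑ j, y j) *
          (∑ j, y j) ^ (-((d : ℝ) - 1))) ^ (-(1 : ℝ) / 2))) := by
  choose A hA using hnat
  have i0 : Fin d := ⟨0, hd⟩
  have hs : 0 < ∑ j, y j := Finset.sum_pos (fun i _ => hy i) ⟨i0, Finset.mem_univ _⟩
  have hsum : Tendsto (fun n => ∑ i, yseq n i) atTop (nhds (∑ j, y j)) :=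
    tendsto_finset_sum _ (fun i _ => hconv i)
  have hsigInf : Tendsto (fun n : ℕ => (n:ℝ) * ∑ i, yseq n i) atTop atTop :=
    Filter.Tendsto.atTop_mul_pos hs tendsto_natCast_atTop_atTop hsum
  have hSInf : Tendsto (fun n => ∑ i, A n i) atTop atTop := by
    rw [← tendsto_natCast_atTop_iff (R := ℝ)]
    refine hsigInf.congr (fun n => ?_)
    push_cast
    rw [Finset.mul_sum]
    exact Finset.sum_congr rfl (fun i _ => hA n i)
  have hAInf : ∀ i, Tendsto (fun n => A n i) atTop atTop := fun i => by
    rw [← tendsto_natCast_atTop_iff (R := ℝ)]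
    have h : Tendsto (fun n : ℕ => (n:ℝ) * yseq n i) atTop atTop :=
      Filter.Tendsto.atTop_mul_pos (hy i) tendsto_natCast_atTop_atTop (hconv i)
    exact h.congr (fun n => hA n i)
  -- limits of the pieces
  have hT1 : Tendsto (fun n : ℕ => ∏ j ∈ Finset.range (d-1),
      (1 + ((j:ℝ)+1)/((n:ℝ) * ∑ i, yseq n i))) atTop (nhds 1) := by
    have h := tendsto_finset_prod (f := fun (j : ℕ) (n : ℕ) =>
        (1 + ((j:ℝ)+1)/((n:ℝ) * ∑ i, yseq n i))) (a := fun _ => (1:ℝ)) (Finset.range (d-1))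
      (fun j _ => by
        have h0 : Tendsto (fun n : ℕ => ((j:ℝ)+1)/((n:ℝ) * ∑ i, yseq n i)) atTop (nhds 0) :=
          Filter.Tendsto.div_atTop tendsto_const_nhds hsigInf
        simpa using (tendsto_const_nhds (x := (1:ℝ))).add h0)
    simpa using h
  have hT2 : Tendsto (fun n => stirlingSeq (∑ i, A n i)) atTop (nhds (Real.sqrt Real.pi)) :=
    Stirling.tendsto_stirlingSeq_sqrt_pi.comp hSInf
  have hT3 : Tendsto (fun n => ∏ i, stirlingSeq (A n i)) atTop
      (nhds ((Real.sqrt Real.pi)^d)) := by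
    have h := tendsto_finset_prod (f := fun (i : Fin d) (n : ℕ) => stirlingSeq (A n i))
      (a := fun _ => Real.sqrt Real.pi) Finset.univ
      (fun i _ => Stirling.tendsto_stirlingSeq_sqrt_pi.comp (hAInf i))
    simpa using h
  have hπd : ((Real.sqrt Real.pi)^d : ℝ) ≠ 0 := by
    have := Real.pi_pos; positivity
  have hT4 : Tendsto (fun n : ℕ => (∑ i, yseq n i)^((d:ℝ)-1)) atTop
      (nhds ((∑ j, y j)^((d:ℝ)-1))) := hsum.rpow_const (Or.inl hs.ne')
  have hT5 : Tendsto (fun n : ℕ => Real.sqrt (∑ i, yseq n i)) atTop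
      (nhds (Real.sqrt (∑ j, y j))) := hsum.sqrt
  have hT6 : Tendsto (fun n : ℕ => ∏ i, Real.sqrt (yseq n i)) atTop
      (nhds (∏ i, Real.sqrt (y i))) :=
    tendsto_finset_prod _ (fun i _ => (hconv i).sqrt)
  have hprodY : (0:ℝ) < ∏ i, Real.sqrt (y i) :=
    Finset.prod_pos fun i _ => Real.sqrt_pos.2 (hy i)
  have hG : Tendsto (fun n : ℕ =>
      (∏ j ∈ Finset.range (d-1), (1 + ((j:ℝ)+1)/((n:ℝ) * ∑ i, yseq n i))) *
      (stirlingSeq (∑ i, A n i) / ∏ i, stirlingSeq (A n i)) *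
      ((2:ℝ)^(-((d:ℝ)-1)/2) * (∑ i, yseq n i)^((d:ℝ)-1) *
        (Real.sqrt (∑ i, yseq n i) / ∏ i, Real.sqrt (yseq n i)))) atTop
      (nhds (1 * (Real.sqrt Real.pi / (Real.sqrt Real.pi)^d) *
        ((2:ℝ)^(-((d:ℝ)-1)/2) * (∑ j, y j)^((d:ℝ)-1) *
          (Real.sqrt (∑ j, y j) / ∏ i, Real.sqrt (y i))))) :=
    (hT1.mul (hT2.div hT3 hπd)).mul
      (((tendsto_const_nhds (x := (2:ℝ)^(-((d:ℝ)-1)/2))).mul hT4).mul (hT5.div hT6 hprodY.ne'))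
  -- identify the limit constant
  have htarget : ((2 * Real.pi) ^ ((d : ℝ) - 1) * (∏ i, y i / ∑ j, y j) *
        (∑ j, y j) ^ (-((d : ℝ) - 1))) ^ (-(1 : ℝ) / 2)
      = 1 * (Real.sqrt Real.pi / (Real.sqrt Real.pi)^d) *
        ((2:ℝ)^(-((d:ℝ)-1)/2) * (∑ j, y j)^((d:ℝ)-1) *
          (Real.sqrt (∑ j, y j) / ∏ i, Real.sqrt (y i))) := by
    have h1 : (∏ i, y i / ∑ j, y j) = (∏ i, y i) / (∑ j, y j)^d := by
      rw [Finset.prod_div_distrib, Finset.prod_const, Finset.card_univ, Fintype.card_fin]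
    have h2 : (∏ i, Real.sqrt (y i)) = Real.sqrt (∏ i, y i) := by
      simp_rw [Real.sqrt_eq_rpow]
      rw [Real.finset_prod_rpow _ _ (fun i _ => (hy i).le)]
    rw [h1, h2, limit_const d hd _ _ hs (Finset.prod_pos fun i _ => hy i)]
  rw [htarget]
  refine Filter.Tendsto.congr' ?_ hG
  filter_upwards [eventually_ge_atTop 1] with n hn
  exact (key_eq d hd n hn (yseq n) (hyseq n) (A n) (hA n)).symm
end
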